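/- arXiv:2306.05325 — 3 statements merged into one kernel-verified Lean document; each statement's English description precedes it below -/
import Mathlib

section
/- Let f : ℝ → ℝ be differentiable and define the Bregman divergence BD_f(ã ∥ z) = f(ã) − f(z) − f'(z)(ã − z). Let r_k*(x) = (Σ_{l=1}^K b_l(x))/a_k(x) be the true density ratio of client k, and let r_k : X → ℝ be any measurable ratio model. Assuming all the integrals below are finite, the expected Bregman discrepancy decomposes as ∫ BD_f(r_k*(x) ∥ r_k(x))·a_k(x) dμ(x) = E_f(r_k) + ∫ f(r_k*(x))·a_k(x) dμ(x), where E_f(r_k) = ∫ (f'(r_k(x))·r_k(x) − f(r_k(x)))·a_k(x) dμ(x) − Σ_{l=1}^K ∫ f'(r_k(x))·b_l(x) dμ(x). In particular, the second summand does not depend on r_k, so minimizing the expected Bregman discrepancy over r_k is equivalent to minimizing the BD risk E_f(r_k). -/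
open MeasureTheory

/-- **Decomposition of the expected Bregman discrepancy.**
With `BD_f(z̃ ∥ z) = f(z̃) − f(z) − f'(z)(z̃ − z)`, the true ratio
`r*(x) = (Σ_l b_l(x)) / a(x)` and any ratio model `r`, assuming all integrals involved are
finite, `∫ BD_f(r*(x) ∥ r(x)) · a(x) dμ = E_f(r) + ∫ f(r*(x)) · a(x) dμ`, where
`E_f(r) = ∫ (f'(r(x))·r(x) − f(r(x)))·a(x) dμ − Σ_l ∫ f'(r(x))·b_l(x) dμ`.
The second summand does not depend on `r`, so minimizing the Bregman discrepancy is
equivalent to minimizing the BD risk `E_f`. -/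
theorem stmt3 {X : Type*} [MeasurableSpace X] (μ : Measure X) [SigmaFinite μ]
    (K : ℕ) (a : X → ℝ) (b : Fin K → X → ℝ)
    (ha_nonneg : ∀ x, 0 ≤ a x) (hb_nonneg : ∀ l x, 0 ≤ b l x)
    (ha_meas : Measurable a) (hb_meas : ∀ l, Measurable (b l))
    (hpos : ∀ᵐ x ∂μ, (∃ l, 0 < b l x) → 0 < a x)
    (f : ℝ → ℝ) (hf : Differentiable ℝ f) (hf_conv : StrictConvexOn ℝ Set.univ f)
    (r : X → ℝ) (hr : Measurable r)
    (hint_bd : Integrable (fun x =>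
      (f ((∑ l, b l x) / a x) - f (r x)
        - deriv f (r x) * ((∑ l, b l x) / a x - r x)) * a x) μ)
    (hint1 : Integrable (fun x => (deriv f (r x) * r x - f (r x)) * a x) μ)
    (hint2 : ∀ l, Integrable (fun x => deriv f (r x) * b l x) μ)
    (hint3 : Integrable (fun x => f ((∑ l, b l x) / a x) * a x) μ) :
    ∫ x, (f ((∑ l, b l x) / a x) - f (r x)
        - deriv f (r x) * ((∑ l, b l x) / a x - r x)) * a x ∂μ
      = ((∫ x, (deriv f (r x) * r x - f (r x)) * a x ∂μ)
          - ∑ l, ∫ x, deriv f (r x) * b l x ∂μ)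
        + ∫ x, f ((∑ l, b l x) / a x) * a x ∂μ := by
  have hsum : Integrable (fun x => ∑ l, deriv f (r x) * b l x) μ :=
    integrable_finset_sum _ (fun l _ => hint2 l)
  have key : ∀ᵐ x ∂μ,
      (f ((∑ l, b l x) / a x) - f (r x)
        - deriv f (r x) * ((∑ l, b l x) / a x - r x)) * a x
      = ((deriv f (r x) * r x - f (r x)) * a x - ∑ l, deriv f (r x) * b l x)
        + f ((∑ l, b l x) / a x) * a x := by
    filter_upwards [hpos] with x hx
    rcases eq_or_lt_of_le (ha_nonneg x) with h0 | h0
    · have hb0 : ∀ l, b l x = 0 := by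
        intro l
        by_contra h
        have h1 := hx ⟨l, lt_of_le_of_ne (hb_nonneg l x) (Ne.symm h)⟩
        linarith
      simp [hb0, h0.symm]
    · have hne : a x ≠ 0 := ne_of_gt h0
      have hs : ∑ l, deriv f (r x) * b l x = deriv f (r x) * ((∑ l, b l x) / a x) * a x := by
        rw [← Finset.mul_sum, mul_assoc, div_mul_cancel₀ _ hne]
      rw [hs]; ring
  have hd : Integrable (fun x =>
      (deriv f (r x) * r x - f (r x)) * a x - ∑ l, deriv f (r x) * b l x) μ :=
    hint1.sub hsum
  rw [integral_congr_ae key]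
  rw [integral_add hd hint3]
  rw [integral_sub hint1 hsum]
  rw [integral_finset_sum _ (fun l _ => hint2 l)]
end

section
/- (Termwise variance comparison.) Let λ, μ, a, b > 0 and 0 < w. If w ≤ (λ/(λ + μ))·√(a/b), then b·μ·w²/(μw + λ)² ≤ a·μ/(μ + λ)². Interpreting a = λ_i (train eigenvalue), b = λ'_i (test eigenvalue), w = w_i (importance ratio), and μ = μ_i (sample count), this says that the variance contribution of each coordinate under importance weighting is no larger than under classical ERM whenever w_i ≤ ξ_i·√(λ_i/λ'_i) with ξ_i = λ/(λ + μ_i). -/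
/-- **Termwise variance comparison.**
For positive reals `λ, μ, a, b` and `0 < w`, if `w ≤ (λ/(λ+μ))·√(a/b)` then
`b·μ·w²/(μw + λ)² ≤ a·μ/(μ + λ)²`: the per-coordinate variance contribution under
importance weighting is no larger than under classical ERM whenever
`w_i ≤ ξ_i·√(λ_i/λ'_i)` with `ξ_i = λ/(λ + μ_i)`. -/
theorem stmt15 (lam μ a b w : ℝ)
    (hlam : 0 < lam) (hμ : 0 < μ) (ha : 0 < a) (hb : 0 < b) (hw : 0 < w)
    (hcond : w ≤ (lam / (lam + μ)) * Real.sqrt (a / b)) :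
    b * μ * w ^ 2 / (μ * w + lam) ^ 2 ≤ a * μ / (μ + lam) ^ 2 := by
  have hab : (0:ℝ) < a / b := div_pos ha hb
  have hsq : Real.sqrt (a / b) ^ 2 = a / b := Real.sq_sqrt hab.le
  have hw2 : w ^ 2 ≤ (lam / (lam + μ)) ^ 2 * (a / b) := by
    calc w ^ 2 ≤ ((lam / (lam + μ)) * Real.sqrt (a / b)) ^ 2 := by
          apply pow_le_pow_left₀ hw.le hcond
      _ = (lam / (lam + μ)) ^ 2 * (a / b) := by rw [mul_pow, hsq]
  have hden : lam ^ 2 ≤ (μ * w + lam) ^ 2 := by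
    apply pow_le_pow_left₀ hlam.le
    nlinarith [mul_pos hμ hw]
  have h1 : b * μ * w ^ 2 / (μ * w + lam) ^ 2 ≤ b * μ * w ^ 2 / lam ^ 2 := by
    apply div_le_div_of_nonneg_left (by positivity) (by positivity) hden
  have h2 : b * μ * w ^ 2 / lam ^ 2 ≤ a * μ / (μ + lam) ^ 2 := by
    rw [div_le_div_iff₀ (by positivity) (by positivity)]
    have hlm : (0:ℝ) < lam + μ := by linarith
    have hbw : b * w ^ 2 * (lam + μ) ^ 2 ≤ a * lam ^ 2 := by
      have h := mul_le_mul_of_nonneg_left hw2 hb.le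
      have : b * ((lam / (lam + μ)) ^ 2 * (a / b)) = a * lam ^ 2 / (lam + μ) ^ 2 := by
        field_simp
      rw [this] at h
      calc b * w ^ 2 * (lam + μ) ^ 2 ≤ a * lam ^ 2 / (lam + μ) ^ 2 * (lam + μ) ^ 2 :=
            mul_le_mul_of_nonneg_right h (by positivity)
        _ = a * lam ^ 2 := by field_simp
    nlinarith [mul_le_mul_of_nonneg_right hbw hμ.le]
  linarith
end

section
/- (Excess risk comparison in the one-hot fixed-design setting.) Let d ∈ ℕ, λ > 0, σ ≥ 0, and for each i ∈ {1,…,d} let μ_i > 0, λ_i > 0, λ'_i > 0, w_i > 0, θ_i ∈ ℝ, and set ξ_i := λ/(λ + μ_i). Suppose that for every i the importance ratio w_i satisfies both the bias condition √(λ'_i/λ_i) ≤ (μ_i w_i + λ)/(μ_i + λ) and the variance condition w_i ≤ ξ_i·√(λ_i/λ'_i). Then the excess risk of the importance-weighted ridge estimate is no larger than that of the classical ERM ridge estimate: λ²·Σ_{i=1}^d θ_i²·λ'_i/(μ_i w_i + λ)² + σ²·Σ_{i=1}^d λ'_i·μ_i·w_i²/(μ_i w_i + λ)² ≤ λ²·Σ_{i=1}^d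 θ_i²·λ_i/(μ_i + λ)² + σ²·Σ_{i=1}^d λ_i·μ_i/(μ_i + λ)². -/
/-- **Excess risk comparison in the one-hot fixed-design setting.**
If for every coordinate `i` the importance ratio `w_i` satisfies the bias condition
`√(λ'_i/λ_i) ≤ (μ_i w_i + λ)/(μ_i + λ)` and the variance condition
`w_i ≤ ξ_i·√(λ_i/λ'_i)` with `ξ_i = λ/(λ + μ_i)`, then the excess risk (bias plus
variance) of the importance-weighted ridge estimate is no larger than that of the
classical ERM ridge estimate. -/
theorem stmt17 (d : ℕ) (lam : ℝ) (hlam : 0 < lam) (σ : ℝ) (hσ : 0 ≤ σ)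
    (μ lam' lamtr w θ : Fin d → ℝ)
    (hμ : ∀ i, 0 < μ i) (hlamtr : ∀ i, 0 < lamtr i) (hlam' : ∀ i, 0 < lam' i)
    (hw : ∀ i, 0 < w i)
    (hbias : ∀ i, Real.sqrt (lam' i / lamtr i) ≤ (μ i * w i + lam) / (μ i + lam))
    (hvar : ∀ i, w i ≤ (lam / (lam + μ i)) * Real.sqrt (lamtr i / lam' i)) :
    lam ^ 2 * (∑ i, θ i ^ 2 * lam' i / (μ i * w i + lam) ^ 2)
      + σ ^ 2 * (∑ i, lam' i * μ i * w i ^ 2 / (μ i * w i + lam) ^ 2)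
    ≤ lam ^ 2 * (∑ i, θ i ^ 2 * lamtr i / (μ i + lam) ^ 2)
      + σ ^ 2 * (∑ i, lamtr i * μ i / (μ i + lam) ^ 2) := by
  have hden : ∀ i, 0 < μ i * w i + lam := fun i =>
    add_pos (mul_pos (hμ i) (hw i)) hlam
  have hden2 : ∀ i, 0 < μ i + lam := fun i => add_pos (hμ i) hlam
  have hbias' : ∀ i, lam' i * (μ i + lam) ^ 2 ≤ lamtr i * (μ i * w i + lam) ^ 2 := by
    intro i
    have h := hbias i
    have hs := Real.sq_sqrt (le_of_lt (div_pos (hlam' i) (hlamtr i)))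
    have h2 : lam' i / lamtr i ≤ ((μ i * w i + lam) / (μ i + lam)) ^ 2 := by
      nlinarith [Real.sqrt_nonneg (lam' i / lamtr i), hden i, hden2 i]
    have h3 : lam' i / lamtr i ≤ (μ i * w i + lam) ^ 2 / (μ i + lam) ^ 2 := by
      rwa [div_pow] at h2
    rw [div_le_div_iff₀ (hlamtr i) (pow_pos (hden2 i) 2)] at h3
    linarith
  have hvar' : ∀ i, lam' i * μ i * w i ^ 2 * (μ i + lam) ^ 2
      ≤ lamtr i * μ i * (μ i * w i + lam) ^ 2 := by
    intro i
    have h := hvar i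
    have hs := Real.sq_sqrt (le_of_lt (div_pos (hlamtr i) (hlam' i)))
    have hsn := Real.sqrt_nonneg (lamtr i / lam' i)
    have h2 : w i ^ 2 ≤ (lam / (lam + μ i)) ^ 2 * (lamtr i / lam' i) := by
      nlinarith [mul_pos (div_pos hlam (add_pos hlam (hμ i)))
        (Real.sqrt_pos.mpr (div_pos (hlamtr i) (hlam' i))), (hw i).le]
    have hA : 0 < (lam + μ i) ^ 2 := pow_pos (add_pos hlam (hμ i)) 2
    have h2' : w i ^ 2 * (lam + μ i) ^ 2 ≤ lam ^ 2 * (lamtr i / lam' i) :=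
      (le_div_iff₀ hA).mp (by rw [div_pow, div_mul_eq_mul_div] at h2; exact h2)
    rw [← mul_div_assoc] at h2'
    have h3 : w i ^ 2 * (lam + μ i) ^ 2 * lam' i ≤ lam ^ 2 * lamtr i :=
      (le_div_iff₀ (hlam' i)).mp h2'
    have h4 : lam ^ 2 ≤ (μ i * w i + lam) ^ 2 := by
      nlinarith [mul_pos (hμ i) (hw i)]
    nlinarith [hμ i, hlamtr i, mul_le_mul_of_nonneg_left h4 (hlamtr i).le,
      mul_le_mul_of_nonneg_left h3 (hμ i).le]
  have sbias : (∑ i, θ i ^ 2 * lam' i / (μ i * w i + lam) ^ 2)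
      ≤ ∑ i, θ i ^ 2 * lamtr i / (μ i + lam) ^ 2 := by
    refine Finset.sum_le_sum fun i _ => ?_
    rw [div_le_div_iff₀ (pow_pos (hden i) 2) (pow_pos (hden2 i) 2)]
    nlinarith [mul_le_mul_of_nonneg_left (hbias' i) (sq_nonneg (θ i))]
  have svar : (∑ i, lam' i * μ i * w i ^ 2 / (μ i * w i + lam) ^ 2)
      ≤ ∑ i, lamtr i * μ i / (μ i + lam) ^ 2 := by
    refine Finset.sum_le_sum fun i _ => ?_
    rw [div_le_div_iff₀ (pow_pos (hden i) 2) (pow_pos (hden2 i) 2)]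
    nlinarith [hvar' i]
  exact add_le_add (mul_le_mul_of_nonneg_left sbias (by positivity))
    (mul_le_mul_of_nonneg_left svar (by positivity))
end
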